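/- arXiv:2504.09938 — 7 statements merged into one kernel-verified Lean document; each statement's English description precedes it below -/
import Mathlib

section
/- For every odd prime p, p does not divide the sum of the first p nonzero Fibonacci numbers, i.e., p ∤ ∑_{i=1}^p F_i. -/
/-!
Since `∑_{i=1}^n F_i = F_{n+2} - 1`, it suffices to show `F_{p+2} ≢ 1 (mod p)` for odd primes `p`.
With `Q = !![1,1;1,0]` we have `Q^n = !![F_{n+1}, F_n; F_n, F_{n-1}]`. Over `𝔽_p`, Frobenius gives
`tr (Q^p) = (tr Q)^p = 1`, i.e. `F_{p+1} + F_{p-1} ≡ 1`, and `det (Q^p) = (-1)^p = -1` is Cassini's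
identity. Together with `F_{p+2} ≡ 1` these three relations force `F_p ≡ F_{p-1} ≡ 1/3` and
`F_p^2 ≡ -1`, hence `10 ≡ 0`, so `p = 5`, which is checked directly.
-/

open Finset Matrix Nat

lemma fib_matrix_pow {R : Type*} [CommSemiring R] (n : ℕ) :
    !![(1 : R), 1; 1, 0] ^ (n + 1) =
      !![(fib (n + 2) : R), fib (n + 1); fib (n + 1), fib n] := by
  induction n with
  | zero => simp
  | succ k ih =>
    rw [pow_succ, ih, Matrix.mul_fin_two]
    ext i j
    fin_cases i <;> fin_cases j <;> simp [fib_add_two] <;> ring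

lemma fib_add_two_eq_sum_Icc_add_one (n : ℕ) : fib (n + 2) = ∑ i ∈ Icc 1 n, fib i + 1 := by
  rw [fib_succ_eq_succ_sum, range_eq_Ico, sum_eq_sum_Ico_succ_bot (succ_pos n),
    fib_zero, zero_add, succ_eq_add_one, Ico_add_one_right_eq_Icc]

lemma fib_add_two_mul_fib_sub_fib_add_one_sq {R : Type*} [CommRing R] (n : ℕ) :
    (fib (n + 2) * fib n - fib (n + 1) ^ 2 : R) = (-1) ^ (n + 1) := by
  have h := congrArg det (fib_matrix_pow (R := R) n)
  rw [det_pow, det_fin_two_of, det_fin_two_of] at h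
  simpa [sq] using h.symm

lemma ZMod.fib_add_two_add_fib_eq_one {k : ℕ} [Fact (k + 1).Prime] :
    (fib (k + 2) + fib k : ZMod (k + 1)) = 1 := by
  have h := ZMod.trace_pow_card (!![(1 : ZMod (k + 1)), 1; 1, 0])
  rw [fib_matrix_pow, trace_fin_two_of, trace_fin_two_of] at h
  simpa using h

lemma dvd_ten_of_fib_add_two_eq_one {p : ℕ} [hp : Fact p.Prime]
    (h : (fib (p + 2) : ZMod p) = 1) : p ∣ 10 := by
  obtain ⟨k, rfl⟩ : ∃ k, p = k + 1 := exists_eq_add_one_of_ne_zero hp.out.ne_zero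
  have lucas := ZMod.fib_add_two_add_fib_eq_one (k := k)
  have cassini := fib_add_two_mul_fib_sub_fib_add_one_sq (R := ZMod (k + 1)) k
  rw [ZMod.pow_card] at cassini
  simp only [fib_add_two] at h lucas cassini
  push_cast at h lucas cassini
  have h10 : ((10 : ℕ) : ZMod (k + 1)) = 0 := by
    push_cast
    linear_combination (3 * (fib k : ZMod (k + 1)) + 9 * fib (k + 1) + 1) * h
      - (6 * (fib k : ZMod (k + 1)) + 9 * fib (k + 1) + 2) * lucas + 9 * cassini
  exact (ZMod.natCast_eq_zero_iff _ _).1 h10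

theorem stmt_3 (p : ℕ) (hp : p.Prime) (hodd : Odd p) :
    ¬ p ∣ ∑ i ∈ Finset.Icc 1 p, Nat.fib i := by
  have := Fact.mk hp
  intro h
  have h10 : p ∣ 2 * 5 := dvd_ten_of_fib_add_two_eq_one <| by
    rw [fib_add_two_eq_sum_Icc_add_one, cast_add, (ZMod.natCast_eq_zero_iff _ _).2 h, zero_add,
      cast_one]
  have hp5 : p = 5 := by
    rcases (Nat.Prime.dvd_mul hp).1 h10 with h2 | h5
    · exact absurd ((prime_dvd_prime_iff_eq hp prime_two).1 h2 ▸ hodd) (by decide)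
    · exact (prime_dvd_prime_iff_eq hp prime_five).1 h5
  subst hp5
  exact absurd h (by decide)
end

section
/- For every even natural number n > 1, the Pisano period of F_n divides 2n; that is, the Fibonacci sequence taken modulo F_n is periodic with period dividing 2n. -/
/-- The Pisano period of `m`: the least positive `k` such that the Fibonacci
sequence modulo `m` satisfies `F (i + k) ≡ F i (mod m)` for all `i`. -/
noncomputable def pisano (m : ℕ) : ℕ :=
  sInf {k | 0 < k ∧ ∀ i, Nat.fib (i + k) ≡ Nat.fib i [MOD m]}

lemma cassini (n : ℕ) :
    (Nat.fib (n + 2) : ℤ) * Nat.fib n - (Nat.fib (n + 1)) ^ 2 = (-1) ^ (n + 1) := by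
  induction n with
  | zero => simp
  | succ k ih =>
    have h2 : (Nat.fib (k + 3) : ℤ) = Nat.fib (k + 1) + Nat.fib (k + 2) := by
      have := Nat.fib_add_two (n := k + 1)
      push_cast [this]; ring
    have h1 : (Nat.fib (k + 2) : ℤ) = Nat.fib k + Nat.fib (k + 1) := by
      have := Nat.fib_add_two (n := k)
      push_cast [this]; ring
    calc (Nat.fib (k + 3) : ℤ) * Nat.fib (k + 1) - (Nat.fib (k + 2)) ^ 2
        = -((Nat.fib (k + 2) : ℤ) * Nat.fib k - (Nat.fib (k + 1)) ^ 2) := by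
          rw [h2]; rw [h1]; ring
      _ = (-1) ^ (k + 2) := by rw [ih]; ring

lemma fib_shift (n i : ℕ) :
    (Nat.fib (i + n) : ZMod (Nat.fib n)) = Nat.fib i * Nat.fib (n + 1) := by
  cases i with
  | zero => simp
  | succ j =>
    have : j + 1 + n = j + n + 1 := by ring
    rw [this, Nat.fib_add]
    push_cast
    simp [ZMod.natCast_self]

lemma fib_sq_one {n : ℕ} (hn : 1 < n) (he : Even n) :
    (Nat.fib (n + 1) : ZMod (Nat.fib n)) ^ 2 = 1 := by
  obtain ⟨m, rfl⟩ : ∃ m, n = m + 2 := ⟨n - 2, by omega⟩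
  have hm : Even m := by rcases he with ⟨k, hk⟩; exact ⟨k - 1, by omega⟩
  have h1 : (Nat.fib (m + 3) : ZMod (Nat.fib (m + 2))) = Nat.fib (m + 1) := by
    have : Nat.fib (m + 3) = Nat.fib (m + 1) + Nat.fib (m + 2) := Nat.fib_add_two
    rw [this]; push_cast; simp [ZMod.natCast_self]
  have hc := cassini m
  have hc' : ((Nat.fib (m + 1) : ℤ) ^ 2 : ZMod (Nat.fib (m + 2))) =
      ((Nat.fib (m + 2) : ℤ) * Nat.fib m - (-1) ^ (m + 1) : ℤ) := by
    rw [← hc]; push_cast; ring_nf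
  rw [h1]
  have : ((Nat.fib (m + 1) : ℤ) : ZMod (Nat.fib (m + 2))) ^ 2 = 1 := by
    push_cast at hc' ⊢
    rw [hc', Odd.neg_one_pow hm.add_one]
    simp [ZMod.natCast_self]
  push_cast at this
  exact this

lemma mem_set (n : ℕ) (hn : 1 < n) (he : Even n) :
    ∀ i, Nat.fib (i + 2 * n) ≡ Nat.fib i [MOD Nat.fib n] := by
  intro i
  rw [← ZMod.natCast_eq_natCast_iff]
  have h1 : i + 2 * n = (i + n) + n := by ring
  rw [h1, fib_shift, fib_shift]
  have := fib_sq_one hn he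
  rw [mul_assoc, ← sq, this, mul_one]

theorem stmt_8 (n : ℕ) (hn : 1 < n) (he : Even n) :
    pisano (Nat.fib n) ∣ 2 * n := by
  set S := {k | 0 < k ∧ ∀ i, Nat.fib (i + k) ≡ Nat.fib i [MOD Nat.fib n]} with hS
  have h2n : 2 * n ∈ S := ⟨by omega, mem_set n hn he⟩
  have hne : S.Nonempty := ⟨2 * n, h2n⟩
  have hp : pisano (Nat.fib n) ∈ S := Nat.sInf_mem hne
  set p := pisano (Nat.fib n) with hpdef
  obtain ⟨hppos, hper⟩ := hp
  -- iterate: for any q, fib (i + q * p) ≡ fib i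
  have hiter : ∀ q i, Nat.fib (i + q * p) ≡ Nat.fib i [MOD Nat.fib n] := by
    intro q
    induction q with
    | zero => simp [Nat.ModEq.refl]
    | succ q ih =>
      intro i
      have : i + (q + 1) * p = (i + q * p) + p := by ring
      rw [this]
      exact (hper (i + q * p)).trans (ih i)
  have hr := Nat.div_add_mod (2 * n) p
  set r := 2 * n % p with hrdef
  by_cases hr0 : r = 0
  · exact Nat.dvd_of_mod_eq_zero hr0
  · exfalso
    have hrS : r ∈ S := by
      refine ⟨Nat.pos_of_ne_zero hr0, fun i => ?_⟩
      have h1 : Nat.fib (i + 2 * n) ≡ Nat.fib i [MOD Nat.fib n] := mem_set n hn he i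
      have h2 : Nat.fib (i + 2 * n) ≡ Nat.fib (i + r) [MOD Nat.fib n] := by
        have hr2 : (2 * n / p) * p + r = 2 * n := by
          conv_rhs => rw [← Nat.div_add_mod (2 * n) p]
          rw [hrdef]; ring
        have : i + 2 * n = (i + r) + (2 * n / p) * p := by omega
        rw [this]
        exact hiter (2 * n / p) (i + r)
      exact (h2.symm.trans h1)
    have hle := Nat.sInf_le hrS
    have hps : p = sInf S := rfl
    have hrlt : r < p := Nat.mod_lt _ hppos
    omega
end

section
/- The infimum over N of min{ π(n)/n : 1 < n < N } tends to 0 as N → ∞; equivalently, for every ε > 0 there exists an integer n > 1 with π(n) < ε·n. -/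
/-!
Modulo `F (n + 1)` the addition formula gives `F (i + n + 1) ≡ F i * F n`, and Cassini's identity
gives `F n ^ 2 ≡ ± 1`; hence `F (i + 4 (n + 1)) ≡ F i * F n ^ 4 ≡ F i`, so `π (F m) ≤ 4 m`.
Since `F m` grows like `φ ^ m`, the ratio `π (F m) / F m` tends to `0`.
-/

open Nat (fib)
open Filter Topology Real
open scoped goldenRatio

theorem Nat.fib_add_two_mul_fib_sub_sq (n : ℕ) :
    (fib (n + 2) : ℤ) * fib n - (fib (n + 1) : ℤ) ^ 2 = (-1) ^ (n + 1) := by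
  have h := Int.fib_succ_mul_fib_pred_sub_fib_sq ((n + 1 : ℕ) : ℤ)
  rwa [Nat.cast_add_one n, add_sub_cancel_right, ← Nat.cast_add_one, ← Nat.cast_add_one,
    Int.natAbs_natCast, Int.fib_natCast, Int.fib_natCast, Int.fib_natCast] at h

section FibModFib

variable (n : ℕ)

theorem natCast_fib_add_succ (i : ℕ) :
    (fib (i + (n + 1)) : ZMod (fib (n + 1))) = fib i * fib n := by
  rw [← add_assoc, Nat.fib_add, Nat.cast_add, Nat.cast_mul, Nat.cast_mul, ZMod.natCast_self,
    mul_zero, add_zero]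

theorem natCast_fib_add_mul_succ (i k : ℕ) :
    (fib (i + k * (n + 1)) : ZMod (fib (n + 1))) = fib i * fib n ^ k := by
  induction k with
  | zero => simp
  | succ k ih => rw [Nat.succ_mul, ← add_assoc, natCast_fib_add_succ, ih, pow_succ, mul_assoc]

theorem natCast_fib_sq : (fib n : ZMod (fib (n + 1))) ^ 2 = (-1) ^ (n + 1) := by
  have h := congrArg (Int.cast : ℤ → ZMod (fib (n + 1))) (Nat.fib_add_two_mul_fib_sub_sq n)
  push_cast [Nat.fib_add_two, ZMod.natCast_self] at h
  linear_combination h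

end FibModFib

theorem pisano_fib_le {n : ℕ} (hn : n ≠ 0) : pisano (fib n) ≤ 4 * n := by
  obtain ⟨n, rfl⟩ := Nat.exists_eq_succ_of_ne_zero hn
  refine Nat.sInf_le ⟨by positivity, fun i => (ZMod.natCast_eq_natCast_iff _ _ _).mp ?_⟩
  rw [natCast_fib_add_mul_succ, show 4 = 2 * 2 from rfl, pow_mul, natCast_fib_sq, ← pow_mul,
    pow_mul', neg_one_sq, one_pow, mul_one]

theorem goldenRatio_pow_le_sq_mul_fib {n : ℕ} (hn : n ≠ 0) : φ ^ n ≤ φ ^ 2 * fib n := by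
  obtain ⟨n, rfl⟩ := Nat.exists_eq_succ_of_ne_zero hn
  have hmono : (fib n : ℝ) ≤ fib (n + 1) := by exact_mod_cast Nat.fib_le_fib_succ
  rw [← goldenRatio_mul_fib_succ_add_fib, goldenRatio_sq]
  linarith

theorem tendsto_natCast_div_fib_atTop : Tendsto (fun n : ℕ => (n : ℝ) / fib n) atTop (𝓝 0) := by
  have h := (tendsto_pow_const_div_const_pow_of_one_lt 1 one_lt_goldenRatio).const_mul (φ ^ 2)
  rw [mul_zero] at h
  refine squeeze_zero' (Eventually.of_forall fun n => by positivity) ?_ h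
  filter_upwards [eventually_ne_atTop 0] with n hn
  have hfib : (0 : ℝ) < fib n := by exact_mod_cast Nat.fib_pos.mpr (Nat.pos_of_ne_zero hn)
  rw [pow_one, mul_div_assoc', div_le_div_iff₀ hfib (by positivity)]
  calc (n : ℝ) * φ ^ n ≤ n * (φ ^ 2 * fib n) := by gcongr; exact goldenRatio_pow_le_sq_mul_fib hn
    _ = φ ^ 2 * n * fib n := by ring

theorem stmt_10 (ε : ℝ) (hε : 0 < ε) :
    ∃ n : ℕ, 1 < n ∧ (pisano n : ℝ) < ε * n := by
  obtain ⟨n, hratio, hn⟩ := (((tendsto_natCast_div_fib_atTop.const_mul 4).eventually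
    (gt_mem_nhds (by linarith : 4 * (0 : ℝ) < ε))).and (eventually_gt_atTop 2)).exists
  have hfib : 1 < fib n := by simpa using (Nat.fib_lt_fib le_rfl).mpr hn
  refine ⟨fib n, hfib, ?_⟩
  calc (pisano (fib n) : ℝ) ≤ 4 * n := by exact_mod_cast pisano_fib_le (by omega)
    _ < ε * fib n := by
      rwa [mul_div_assoc', div_lt_iff₀ (by positivity)] at hratio
end

section
/- Let p be an odd prime with p ≡ 2 (mod 3) and p ≡ ±2 (mod 5), and let n = 2p. Then F_n ≡ -1 (mod 2n). -/
open Matrix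



private lemma fibQpow (p : ℕ) [Fact p.Prime] :
    ∀ m : ℕ, (!![1,1;1,0] : Matrix (Fin 2) (Fin 2) (ZMod p)) ^ (m+1)
      = !![(Nat.fib (m+2) : ZMod p), Nat.fib (m+1); Nat.fib (m+1), Nat.fib m] := by
  intro m
  induction m with
  | zero => simp
  | succ m ih =>
    rw [pow_succ, ih, Matrix.mul_fin_two]
    ext i j
    fin_cases i <;> fin_cases j <;> simp [Nat.fib_add_two] <;> ring

private lemma fib_two_mul_p (p : ℕ) [hpf : Fact p.Prime] (hodd : Odd p)
    (h5 : (5 : ZMod p) ^ (p / 2) = -1) : ((Nat.fib (2*p) : ZMod p)) = -1 := by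
  have hp := hpf.out
  let c : ZMod p →+* Matrix (Fin 2) (Fin 2) (ZMod p) := Matrix.scalar (Fin 2)
  set Q : Matrix (Fin 2) (Fin 2) (ZMod p) := !![1,1;1,0] with hQdef
  set S : Matrix (Fin 2) (Fin 2) (ZMod p) := !![1,2;2,-1] with hSdef
  have hc : ∀ r : ZMod p, c r = !![r, 0; 0, r] := by
    intro r
    ext i j
    fin_cases i <;> fin_cases j <;>
      simp [c, Matrix.scalar_apply, Matrix.diagonal_apply]
  have hQQ : Q * Q = Q + 1 := by
    rw [hQdef, Matrix.mul_fin_two, Matrix.one_fin_two]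
    ext i j
    fin_cases i <;> fin_cases j <;> simp [Matrix.add_apply] <;> norm_num
  have hS : c 2 * Q = S + 1 := by
    rw [hc, hQdef, hSdef, Matrix.mul_fin_two, Matrix.one_fin_two]
    ext i j
    fin_cases i <;> fin_cases j <;> simp [Matrix.add_apply] <;> norm_num
  have hS2 : S * S = c 5 := by
    rw [hc, hSdef, Matrix.mul_fin_two]
    ext i j
    fin_cases i <;> fin_cases j <;> simp [Matrix.add_apply] <;> ring
  -- S ^ p = -S
  have hpm2 : p % 2 = 1 := Nat.odd_iff.mp hodd
  have hodd2 : p = 2 * (p / 2) + 1 := by omega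
  have hSp : S ^ p = - S := by
    calc S ^ p = (S * S) ^ (p / 2) * S := by
          have h' : S ^ p = S ^ (2 * (p / 2) + 1) := by rw [← hodd2]
          rw [h', pow_succ, pow_mul, sq]
      _ = c ((5 : ZMod p) ^ (p / 2)) * S := by rw [hS2, ← map_pow]
      _ = - S := by rw [h5, map_neg, _root_.map_one, neg_one_mul]
  -- Frobenius
  have hcomm : Commute (c 2) Q := (Matrix.scalar_commute _ (fun r => Commute.all _ r) Q)
  have hfrob : (c 2) ^ p * Q ^ p = - S + 1 := by
    rw [← hcomm.mul_pow, hS, add_pow_char_of_commute p (Commute.one_right S), hSp, one_pow]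
  have h2p : (c 2 : Matrix (Fin 2) (Fin 2) (ZMod p)) ^ p = c 2 := by
    rw [← map_pow, ZMod.pow_card]
  have h2ne : (2 : ZMod p) ≠ 0 := by
    have : ((2 : ℕ) : ZMod p) ≠ 0 := by
      rw [Ne, ZMod.natCast_eq_zero_iff]
      intro hdvd
      have := (Nat.prime_dvd_prime_iff_eq hp Nat.prime_two).mp hdvd
      omega
    simpa using this
  have hc2 : c 2 = 2 := by
    rw [show (2 : ZMod p) = 1 + 1 by norm_num, map_add, _root_.map_one]
    norm_num
  have hQp : Q ^ p = 1 - Q := by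
    have h1 : c 2 * Q ^ p = c 2 * (1 - Q) := by
      calc c 2 * Q ^ p = c 2 ^ p * Q ^ p := by rw [h2p]
        _ = -S + 1 := hfrob
        _ = c 2 * (1 - Q) := by
            rw [mul_sub, mul_one, hS, hc2,
              show (2 : Matrix (Fin 2) (Fin 2) (ZMod p)) = 1 + 1 from (one_add_one_eq_two).symm]
            abel
    have h2 := congrArg (fun X => c (2 : ZMod p)⁻¹ * X) h1
    simpa [← mul_assoc, ← _root_.map_mul, inv_mul_cancel₀ h2ne, _root_.map_one] using h2
  have hQp1 : Q ^ (p+1) = -1 := by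
    rw [pow_succ, hQp, sub_mul, one_mul, hQQ]
    noncomm_ring
  have hQ2p2 : Q ^ (2*p+2) = 1 := by
    have : 2*p+2 = (p+1)*2 := by ring
    rw [this, pow_mul, hQp1, neg_one_sq]
  have hfib := fibQpow p (2*p+1)
  rw [show 2*p+1+1 = 2*p+2 from rfl] at hfib
  rw [hfib, Matrix.one_fin_two] at hQ2p2
  have e01 : (Nat.fib (2*p+1+1) : ZMod p) = 0 := by
    have := congrFun (congrFun hQ2p2 0) 1
    simpa using this
  have e11 : (Nat.fib (2*p+1) : ZMod p) = 1 := by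
    have := congrFun (congrFun hQ2p2 1) 1
    simpa using this
  have hrec : (Nat.fib (2*p+1+1) : ZMod p) = Nat.fib (2*p+1) + Nat.fib (2*p) := by
    rw [Nat.fib_add_two]
    push_cast
    ring
  rw [hrec, e11] at e01
  linear_combination e01


private instance fact5 : Fact (Nat.Prime 5) := ⟨by norm_num⟩

private lemma leg2 : legendreSym 5 ((2 : ℕ) : ℤ) = -1 := by decide
private lemma leg3 : legendreSym 5 ((3 : ℕ) : ℤ) = -1 := by decide

private lemma euler5 (p : ℕ) [hpf : Fact p.Prime] (hodd : Odd p)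
    (h5 : p % 5 = 2 ∨ p % 5 = 3) : (5 : ZMod p) ^ (p / 2) = -1 := by
  have hp := hpf.out
  have hp2 : p ≠ 2 := by rintro rfl; exact (by decide : ¬ Odd 2) hodd
  have hrec : legendreSym p 5 = legendreSym 5 p :=
    legendreSym.quadratic_reciprocity_one_mod_four (by norm_num) hp2
  have hmod : legendreSym 5 (p : ℤ) = legendreSym 5 ((p % 5 : ℕ) : ℤ) := by
    rw [legendreSym.mod]
    congr 1
  have hval : legendreSym 5 ((p % 5 : ℕ) : ℤ) = -1 := by
    rcases h5 with h | h <;> rw [h]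
    · exact leg2
    · exact leg3
  have hleg : legendreSym p 5 = -1 := by rw [hrec, hmod, hval]
  have h := legendreSym.eq_pow p 5
  rw [hleg] at h
  have h' := h.symm
  push_cast at h'
  exact h'

private lemma fib_mod4 (k : ℕ) : Nat.fib (6*k+4) % 4 = 3 := by
  induction k with
  | zero => decide
  | succ k ih =>
    have h : 6*(k+1)+4 = (6*k+4) + 5 + 1 := by ring
    have h2 := Nat.fib_add (6*k+4) 5
    rw [h, h2, show Nat.fib 5 = 5 from rfl, show Nat.fib (5+1) = 8 from rfl]
    omega


theorem stmt_12 (p : ℕ) (hp : p.Prime) (hodd : Odd p)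
    (h3 : p % 3 = 2) (h5 : p % 5 = 2 ∨ p % 5 = 3) (n : ℕ) (hn : n = 2 * p) :
    (Nat.fib n : ℤ) ≡ -1 [ZMOD (2 * n)] := by
  subst hn
  haveI : Fact p.Prime := ⟨hp⟩
  have hmodp : (Nat.fib (2*p) : ℤ) ≡ -1 [ZMOD (p : ℤ)] := by
    have h := fib_two_mul_p p hodd (euler5 p hodd h5)
    have h' : ((Nat.fib (2*p) : ℤ) : ZMod p) = ((-1 : ℤ) : ZMod p) := by push_cast; exact h
    exact (ZMod.intCast_eq_intCast_iff _ _ _).mp h'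
  obtain ⟨k, hk⟩ : ∃ k, 2*p = 6*k+4 :=
    ⟨(2*p-4)/6, by have := Nat.odd_iff.mp hodd; omega⟩
  have h4n : Nat.fib (2*p) % 4 = 3 := by rw [hk]; exact fib_mod4 k
  have hmod4 : (Nat.fib (2*p) : ℤ) ≡ -1 [ZMOD 4] := by
    show (Nat.fib (2*p) : ℤ) % 4 = (-1) % 4
    omega
  have hnd : ¬ (p ∣ 4) := by
    intro hd
    have h22 : p ∣ 2 ^ 2 := by norm_num; exact hd
    have := (Nat.prime_dvd_prime_iff_eq hp Nat.prime_two).mp (hp.dvd_of_dvd_pow h22)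
    have := Nat.odd_iff.mp hodd
    omega
  have hco : (4 : ℤ).natAbs.Coprime ((p : ℤ)).natAbs := by
    simpa using (Nat.Coprime.symm (hp.coprime_iff_not_dvd.mpr hnd))
  have hcomb := (Int.modEq_and_modEq_iff_modEq_mul hco).mp ⟨hmod4, hmodp⟩
  have hmul : (4 : ℤ) * (p : ℤ) = 2 * ((2 * p : ℕ) : ℤ) := by push_cast; ring
  rw [hmul] at hcomb
  exact hcomb
end

section
/- Let p be an odd prime with p ≡ 2 (mod 3) and p ≡ ±2 (mod 5), and let n = 4p. Then F_n is odd and F_n divides F_{F_n + 2} - 1. -/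
/-!
Let `N = F_{4p}`. By quadratic reciprocity `5` is not a square mod `p`, so the Frobenius
of `𝔽_p(√5)` swaps `1 ± √5` and Binet's formula gives `p ∣ F_{p+1}`. Modulo a number dividing
`F_m`, shifting an index by `m` multiplies by `F_{m+1}`, whose square is `(-1)^m` by Cassini. With
`m = p + 1` this gives `N ≡ F_{-4} = -3 (mod p)`; with `m = 12` (`F_12 = 144`) it gives
`N ≡ F_8 ≡ 5 (mod 8)` since `4p ≡ 8 (mod 12)`. So `8p = 2n` divides `N + 3`, and with `m = n`
(even) the Fibonacci sequence is `2n`-periodic modulo `F_n`, whence `F_{N+2} ≡ F_{-1} = 1`.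
-/

namespace Int

variable {R : Type*} [CommRing R] {n : ℤ}

theorem cast_fib_add_of_cast_fib_eq_zero (h : (fib n : R) = 0) (m : ℤ) :
    (fib (m + n) : R) = fib m * fib (n + 1) := by
  rw [fib_add]; push_cast; rw [h]; ring

theorem cast_fib_add_mul_of_cast_fib_eq_zero (h : (fib n : R) = 0) (m : ℤ) (q : ℕ) :
    (fib (m + n * q) : R) = fib m * fib (n + 1) ^ q := by
  induction q with
  | zero => simp
  | succ q ih =>
    rw [Nat.cast_succ, mul_add_one, ← add_assoc, cast_fib_add_of_cast_fib_eq_zero h, ih, pow_succ,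
      mul_assoc]

theorem cast_fib_add_one_sq_of_cast_fib_eq_zero (h : (fib n : R) = 0) :
    (fib (n + 1) : R) ^ 2 = (-1) ^ n.natAbs := by
  have cassini := congrArg (Int.cast (R := R)) (fib_succ_mul_fib_pred_sub_fib_sq n)
  have hpred := congrArg (Int.cast (R := R)) (fib_add_two (n - 1))
  rw [sub_add_cancel, show n - 1 + 2 = n + 1 by ring] at hpred
  push_cast at cassini hpred
  rw [h] at cassini hpred
  linear_combination cassini + (fib (n + 1) : R) * hpred

end Int

theorem one_add_pow_sub_one_sub_pow_eq_fib {R : Type*} [CommRing R] {α : R} (hα : α ^ 2 = 5)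
    (k : ℕ) : (1 + α) ^ k - (1 - α) ^ k = 2 ^ k * Nat.fib k * α := by
  induction k using Nat.twoStepInduction with
  | zero => simp
  | one => simp; ring
  | more k ih₀ ih₁ =>
    rw [Nat.fib_add_two, Nat.cast_add]
    linear_combination ((1 + α) ^ k - (1 - α) ^ k) * hα + 4 * ih₀ + 2 * ih₁

theorem ZMod.natCast_fib_add_one_eq_zero_of_sq_eq_five {p : ℕ} [Fact p.Prime] {K : Type*}
    [Field K] [Algebra (ZMod p) K] (h5 : ¬IsSquare (5 : ZMod p)) {α : K} (hα : α ^ 2 = 5) :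
    (Nat.fib (p + 1) : ZMod p) = 0 := by
  have hp2 : p ≠ 2 := by rintro rfl; exact h5 ⟨1, rfl⟩
  have h5ne : (5 : ZMod p) ≠ 0 := fun h => h5 ⟨0, by simp [h]⟩
  have hι := (algebraMap (ZMod p) K).injective
  have : CharP K p := charP_of_injective_algebraMap hι p
  have hα0 : α ≠ 0 := by
    rintro rfl
    exact h5ne (hι (by rw [map_ofNat, map_zero]; simpa [eq_comm] using hα))
  have hαp : α ^ p = -α := by
    have euler : (5 : ZMod p) ^ (p / 2) = -1 :=
      (ZMod.pow_div_two_eq_neg_one_or_one p h5ne).resolve_left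
        (mt (ZMod.euler_criterion p h5ne).mpr h5)
    rw [← Nat.two_mul_div_two_add_one_of_odd ((Fact.out : p.Prime).odd_of_ne_two hp2), pow_succ,
      pow_mul, hα, ← map_ofNat (algebraMap (ZMod p) K), ← map_pow, euler, map_neg, map_one,
      neg_one_mul]
  have hfrob : (1 + α) ^ (p + 1) = (1 - α) ^ (p + 1) := by
    rw [pow_succ, pow_succ, add_pow_char, sub_pow_char, one_pow, hαp]; ring
  have h := one_add_pow_sub_one_sub_pow_eq_fib hα (p + 1)
  rw [hfrob, sub_self, eq_comm] at h
  have h2 : (2 : K) ≠ 0 := Ring.two_ne_zero (by rwa [ringChar.eq K p])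
  rw [← map_eq_zero_iff _ hι, map_natCast]
  simpa [h2, hα0] using h

theorem ZMod.natCast_fib_add_one_eq_zero {p : ℕ} [Fact p.Prime] (h5 : ¬IsSquare (5 : ZMod p)) :
    (Nat.fib (p + 1) : ZMod p) = 0 := by
  obtain ⟨_, hα⟩ := IsAlgClosed.exists_pow_nat_eq (5 : AlgebraicClosure (ZMod p)) two_pos
  exact natCast_fib_add_one_eq_zero_of_sq_eq_five h5 hα

theorem ZMod.not_isSquare_five {p : ℕ} [Fact p.Prime] (hp2 : p ≠ 2)
    (h5 : p % 5 = 2 ∨ p % 5 = 3) : ¬IsSquare (5 : ZMod p) := by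
  have : Fact (Nat.Prime 5) := ⟨by norm_num⟩
  rw [← Nat.cast_ofNat, ← ZMod.exists_sq_eq_prime_iff_of_mod_four_eq_one (by norm_num) hp2,
    ← ZMod.natCast_mod]
  rcases h5 with h | h <;> rw [h] <;> decide +revert

theorem ZMod.natCast_fib_four_mul_eq_neg_three {p : ℕ} [Fact p.Prime]
    (h5 : ¬IsSquare (5 : ZMod p)) : (Nat.fib (4 * p) : ZMod p) = -3 := by
  have h0 : (Int.fib (p + 1 : ℕ) : ZMod p) = 0 := by
    rw [Int.fib_natCast, Int.cast_natCast]; exact natCast_fib_add_one_eq_zero h5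
  have h := Int.cast_fib_add_mul_of_cast_fib_eq_zero h0 (-4) (2 * 2)
  rw [show -4 + ((p + 1 : ℕ) : ℤ) * (2 * 2 : ℕ) = (4 * p : ℕ) by push_cast; ring,
    Int.fib_natCast, Int.cast_natCast, pow_mul, Int.cast_fib_add_one_sq_of_cast_fib_eq_zero h0,
    ← pow_mul, (even_two.mul_left _).neg_one_pow, show Int.fib (-4) = -3 by decide] at h
  simpa using h

theorem Nat.fib_four_mul_mod_eight {m : ℕ} (hm : m % 3 = 2) : fib (4 * m) % 8 = 5 := by
  have h12 : (Int.fib 12 : ZMod 8) = 0 := by decide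
  have hm : ((4 * m : ℕ) : ℤ) = 8 + 12 * (m / 3 : ℕ) := by omega
  have h := Int.cast_fib_add_mul_of_cast_fib_eq_zero h12 8 (m / 3)
  rw [← hm, Int.fib_natCast, Int.cast_natCast,
    show (Int.fib 8 : ZMod 8) = 5 by decide, show (Int.fib (12 + 1) : ZMod 8) = 1 by decide,
    one_pow, mul_one] at h
  exact (ZMod.natCast_eq_natCast_iff' _ 5 8).mp h

theorem Nat.fib_dvd_fib_sub_one_of_two_mul_dvd {n m : ℕ} (hn : Even n) (h : 2 * n ∣ m + 1) :
    fib n ∣ fib m - 1 := by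
  obtain ⟨j, hj⟩ := h
  rw [mul_assoc] at hj
  have h0 : (Int.fib n : ZMod (fib n)) = 0 := by simp
  have hsq := Int.cast_fib_add_one_sq_of_cast_fib_eq_zero h0
  rw [Int.natAbs_natCast, hn.neg_one_pow] at hsq
  have hm : (m : ℤ) = -1 + n * (2 * j : ℕ) := by
    push_cast; linear_combination (by exact_mod_cast hj : (m : ℤ) + 1 = 2 * (n * j))
  have h := Int.cast_fib_add_mul_of_cast_fib_eq_zero h0 (-1) (2 * j)
  rw [← hm, pow_mul, hsq, Int.fib_neg_one, Int.fib_natCast] at h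
  simp only [one_pow, Int.cast_one, mul_one, Int.cast_natCast] at h
  exact (Nat.modEq_iff_dvd' (Nat.fib_pos.mpr (by omega))).mp
    ((ZMod.natCast_eq_natCast_iff _ _ _).mp (by rw [h, Nat.cast_one])).symm

theorem stmt_13 (p : ℕ) (hp : p.Prime) (hodd : Odd p)
    (h3 : p % 3 = 2) (h5 : p % 5 = 2 ∨ p % 5 = 3) (n : ℕ) (hn : n = 4 * p) :
    Odd (Nat.fib n) ∧ Nat.fib n ∣ Nat.fib (Nat.fib n + 2) - 1 := by
  subst hn
  have : Fact p.Prime := ⟨hp⟩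
  have hp2 : p ≠ 2 := by rintro rfl; contradiction
  have hmod8 := Nat.fib_four_mul_mod_eight h3
  refine ⟨Nat.odd_iff.mpr (by omega),
    Nat.fib_dvd_fib_sub_one_of_two_mul_dvd ⟨2 * p, by ring⟩ ?_⟩
  have hdvd_p : p ∣ Nat.fib (4 * p) + 3 := by
    rw [← ZMod.natCast_eq_zero_iff, Nat.cast_add,
      ZMod.natCast_fib_four_mul_eq_neg_three (ZMod.not_isSquare_five hp2 h5)]
    norm_num
  have hdvd_8 : 8 ∣ Nat.fib (4 * p) + 3 := by omega
  have hcop : Nat.Coprime 8 p := (Nat.coprime_two_left.mpr hodd).pow_left 3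
  rw [← mul_assoc]
  exact hcop.mul_dvd_of_dvd_of_dvd hdvd_8 hdvd_p
end

section
/- For every prime p with p ≡ 2 or 3 (mod 5), the Pisano period π(p) divides 2(p+1). -/
open Polynomial

lemma period_of_fib_cong {m k : ℕ} (h0 : Nat.fib k ≡ 0 [MOD m])
    (h1 : Nat.fib (k + 1) ≡ 1 [MOD m]) :
    ∀ i, Nat.fib (i + k) ≡ Nat.fib i [MOD m] := by
  intro i
  induction i using Nat.strong_induction_on with
  | _ i ih =>
    match i with
    | 0 => simpa using h0
    | 1 => simpa [Nat.add_comm] using h1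
    | (j+2) =>
      have a := ih j (by omega)
      have b := ih (j+1) (by omega)
      have e1 : j + 2 + k = (j + k) + 2 := by omega
      have e2 : j + 1 + k = (j + k) + 1 := by omega
      rw [e1, Nat.fib_add_two, Nat.fib_add_two]
      exact Nat.ModEq.add a (by rwa [e2] at b)

lemma period_mul {m k : ℕ} (h : ∀ i, Nat.fib (i + k) ≡ Nat.fib i [MOD m]) :
    ∀ q i, Nat.fib (i + k * q) ≡ Nat.fib i [MOD m] := by
  intro q
  induction q with
  | zero => simp [Nat.ModEq.refl]
  | succ q ih =>
    intro i
    have e : i + k * (q + 1) = (i + k * q) + k := by ring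
    rw [e]
    exact (h (i + k * q)).trans (ih i)

lemma pisano_dvd {m k : ℕ} (hk : 0 < k)
    (hper : ∀ i, Nat.fib (i + k) ≡ Nat.fib i [MOD m]) : pisano m ∣ k := by
  unfold pisano
  set S := {k | 0 < k ∧ ∀ i, Nat.fib (i + k) ≡ Nat.fib i [MOD m]} with hS
  set d := sInf S with hd
  have hkS : k ∈ S := ⟨hk, hper⟩
  have hdS : d ∈ S := Nat.sInf_mem ⟨k, hkS⟩
  obtain ⟨hdpos, hdper⟩ := hdS
  by_contra hnd
  have hr : k % d ≠ 0 := fun h => hnd (Nat.dvd_of_mod_eq_zero h)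
  have hrS : k % d ∈ S := by
    refine ⟨Nat.pos_of_ne_zero hr, fun i => ?_⟩
    have h2 := period_mul hdper (k / d) (i + k % d)
    have e : i + k % d + d * (k / d) = i + k := by
      rw [add_assoc, Nat.mod_add_div]
    rw [e] at h2
    exact h2.symm.trans (hper i)
  have h3 := Nat.sInf_le hrS
  have h4 := Nat.mod_lt k hdpos
  omega

lemma two_nonsq_mod5 : ¬ IsSquare ((2 : ℕ) : ZMod 5) := by decide
lemma three_nonsq_mod5 : ¬ IsSquare ((3 : ℕ) : ZMod 5) := by decide

lemma key (p : ℕ) (hp : p.Prime) (h5 : p % 5 = 2 ∨ p % 5 = 3) (hp2 : p ≠ 2) :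
    (Nat.fib (2 * (p + 1)) : ZMod p) = 0 ∧ (Nat.fib (2 * (p + 1) + 1) : ZMod p) = 1 := by
  haveI : Fact p.Prime := ⟨hp⟩
  haveI : Fact (Nat.Prime 5) := ⟨by norm_num⟩
  have hp5 : p ≠ 5 := by rintro rfl; omega
  -- 5 is not a square mod p
  have hns : ¬ IsSquare (5 : ZMod p) := by
    have h1 : legendreSym p 5 = legendreSym 5 p := by
      have := legendreSym.quadratic_reciprocity_one_mod_four (p := 5) (q := p) (by norm_num) hp2
      exact_mod_cast this
    have h2 : legendreSym 5 p = legendreSym 5 ((p : ℤ) % 5) := legendreSym.mod 5 p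
    have h3 : ((p : ℤ) % 5) = ((p % 5 : ℕ) : ℤ) := by
      push_cast [Int.emod_emod_of_dvd]
      omega
    have h4 : legendreSym p 5 = -1 := by
      rw [h1, h2, h3]
      rcases h5 with h | h <;> rw [h]
      · exact (legendreSym.eq_neg_one_iff' 5).mpr two_nonsq_mod5
      · exact (legendreSym.eq_neg_one_iff' 5).mpr three_nonsq_mod5
    have := (legendreSym.eq_neg_one_iff p (a := 5)).mp h4
    simpa using this
  have hnoroot : ∀ c : ZMod p, c ^ 2 - c - 1 ≠ 0 := by
    intro c hc
    exact hns ⟨2 * c - 1, by linear_combination (-4 : ZMod p) * hc⟩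
  -- the quadratic f = X² - X - 1 is irreducible over ZMod p
  set f : (ZMod p)[X] := X ^ 2 - X - 1 with hf
  have hdeg : f.natDegree = 2 := by
    rw [hf]
    compute_degree!
  have hirr : Irreducible f := by
    rw [irreducible_iff_roots_eq_zero_of_degree_le_three (by omega) (by omega)]
    rw [Multiset.eq_zero_iff_forall_notMem]
    intro c hc
    rw [mem_roots (by intro h; rw [h] at hdeg; simp at hdeg)] at hc
    apply hnoroot c
    have := hc
    simpa [hf, IsRoot] using this
  haveI : Fact (Irreducible f) := ⟨hirr⟩
  set K := AdjoinRoot f with hK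
  set α : K := AdjoinRoot.root f with hαdef
  have hα : α ^ 2 = α + 1 := by
    have h0 := AdjoinRoot.eval₂_root f
    rw [hf] at h0
    simp only [eval₂_sub, eval₂_pow, eval₂_X, eval₂_one] at h0
    have : α ^ 2 - α - 1 = 0 := h0
    linear_combination this
  have hinj : Function.Injective (algebraMap (ZMod p) K) :=
    (algebraMap (ZMod p) K).injective
  haveI : CharP K p := charP_of_injective_algebraMap hinj p
  -- α is not in the image of ZMod p
  have himg : ∀ c : ZMod p, α ≠ algebraMap (ZMod p) K c := by
    intro c h
    apply hnoroot c
    apply hinj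
    rw [map_sub, map_sub, map_pow, map_one, map_zero, ← h]
    linear_combination hα
  -- linear independence of 1, α
  have hindep : ∀ a b : ZMod p,
      algebraMap (ZMod p) K a * α + algebraMap (ZMod p) K b = 0 → a = 0 ∧ b = 0 := by
    intro a b hab
    by_cases ha : a = 0
    · subst ha
      refine ⟨rfl, hinj ?_⟩
      rw [map_zero] at hab ⊢
      linear_combination hab
    · exfalso
      apply himg (-b / a)
      rw [map_div₀, map_neg, eq_div_iff (by simpa using fun h => ha (hinj (by rw [h, map_zero])))]
      linear_combination hab
  -- Frobenius: α^p is a root of the quadratic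
  have hfrob : (α ^ p) ^ 2 = α ^ p + 1 := by
    have h1 : (α ^ 2) ^ p = (α + 1) ^ p := by rw [hα]
    rw [add_pow_char, one_pow] at h1
    rw [← pow_mul, mul_comm 2 p, pow_mul] at h1
    exact h1
  have hcase : α ^ p = α ∨ α ^ p = 1 - α := by
    have hz : (α ^ p - α) * (α ^ p - (1 - α)) = 0 := by
      linear_combination hfrob - hα
    rcases mul_eq_zero.mp hz with h | h
    · exact Or.inl (by linear_combination h)
    · exact Or.inr (by linear_combination h)
  -- rule out α^p = α
  have hBcase : α ^ p = 1 - α := by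
    rcases hcase with hA | hB
    · exfalso
      have hmonic : ((X : (ZMod p)[X]) ^ p - X).Monic := by
        apply monic_X_pow_sub
        rw [degree_X]
        exact_mod_cast hp.one_lt
      have hroots : ((X : (ZMod p)[X]) ^ p - X).roots = Finset.univ.val := by
        have := FiniteField.roots_X_pow_card_sub_X (ZMod p)
        rwa [ZMod.card] at this
      have hcard : Multiset.card ((X : (ZMod p)[X]) ^ p - X).roots
          = ((X : (ZMod p)[X]) ^ p - X).natDegree := by
        rw [hroots, FiniteField.X_pow_card_sub_X_natDegree_eq _ hp.one_lt]
        simp [ZMod.card p]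
      have hprod := prod_multiset_X_sub_C_of_monic_of_roots_card_eq hmonic hcard
      have h0 : aeval α ((X : (ZMod p)[X]) ^ p - X) = 0 := by
        rw [map_sub, map_pow, aeval_X, hA, sub_self]
      rw [← hprod, map_multiset_prod] at h0
      rw [Multiset.prod_eq_zero_iff] at h0
      obtain ⟨x, hx, hx0⟩ := Multiset.mem_map.mp h0
      obtain ⟨c, hc, rfl⟩ := Multiset.mem_map.mp hx
      rw [map_sub, aeval_X, aeval_C, sub_eq_zero] at hx0
      exact himg c hx0
    · exact hB
  -- α^(p+1) = -1, hence α^(2(p+1)) = 1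
  have hp1 : α ^ (p + 1) = -1 := by
    rw [pow_succ, hBcase]
    linear_combination -hα
  have h2p : α ^ (2 * (p + 1)) = 1 := by
    rw [mul_comm 2, pow_mul, hp1]
    norm_num
  -- Fibonacci via powers of α
  have hfib : ∀ n, α ^ (n + 1) = (Nat.fib (n + 1) : K) * α + (Nat.fib n : K) := by
    intro n
    induction n with
    | zero => simp
    | succ n ih =>
      rw [pow_succ, ih]
      push_cast [Nat.fib_add_two]
      linear_combination (Nat.fib (n + 1) : K) * hα
  have heq : (Nat.fib (2 * (p + 1) + 1) : K) * α + (Nat.fib (2 * (p + 1)) : K) = α := by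
    rw [← hfib, pow_succ, h2p, one_mul]
  have hmain : ((Nat.fib (2 * (p + 1) + 1) : ZMod p) - 1 = 0)
      ∧ (Nat.fib (2 * (p + 1)) : ZMod p) = 0 := by
    apply hindep
    rw [map_sub, map_natCast, map_natCast, map_one]
    linear_combination heq
  refine ⟨hmain.2, ?_⟩
  have := hmain.1
  linear_combination this

theorem stmt_15 (p : ℕ) (hp : p.Prime) (h5 : p % 5 = 2 ∨ p % 5 = 3) :
    pisano p ∣ 2 * (p + 1) := by
  by_cases hp2 : p = 2
  · subst hp2
    apply pisano_dvd (by norm_num)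
    apply period_of_fib_cong <;> decide
  · obtain ⟨h0, h1⟩ := key p hp h5 hp2
    apply pisano_dvd (by positivity)
    apply period_of_fib_cong
    · rw [← ZMod.natCast_eq_natCast_iff]
      simpa using h0
    · rw [← ZMod.natCast_eq_natCast_iff]
      simpa using h1
end

section
/- For every natural number n ≥ 0, 3·2^{n+3} divides the sum of the first 3·2^{n+3} Fibonacci numbers, i.e., 3·2^{n+3} ∣ ∑_{i=1}^{3·2^{n+3}} F_i. -/
/-!
The sum of `F_1, …, F_m` is `F_{m+2} - 1 = F_m + (F_{m+1} - 1)`, so it suffices that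
`F_m ≡ 0` and `F_{m+1} ≡ 1` modulo `m`. For `m = 24` this is a computation. The doubling formulas
`F_{2m} = F_m (2 F_{m+1} - F_m)` and `F_{2m+1} = F_{m+1}^2 + F_m^2` then carry these two
congruences from a modulus `M` to `2 M` (for `2m` in place of `m`), provided `M` is even: writing
`F_m = M a` and `F_{m+1} = 1 + M b`, the error terms are multiples of `M^2`.
-/

open Finset

namespace Nat

theorem sum_Icc_one_fib_add_one (m : ℕ) : ∑ i ∈ Icc 1 m, fib i + 1 = fib (m + 2) := by
  induction m with
  | zero => simp
  | succ m ih => rw [sum_Icc_succ_top (by omega), add_right_comm, ih, fib_add_two (n := m + 1)]; ring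

theorem dvd_sum_Icc_one_fib {M m : ℕ} (h₀ : (M : ℤ) ∣ fib m) (h₁ : (M : ℤ) ∣ fib (m + 1) - 1) :
    M ∣ ∑ i ∈ Icc 1 m, fib i := by
  have hsum : ((∑ i ∈ Icc 1 m, fib i : ℕ) : ℤ) = fib m + (fib (m + 1) - 1) := by
    have : ((∑ i ∈ Icc 1 m, fib i : ℕ) : ℤ) + 1 = fib m + fib (m + 1) := by
      exact_mod_cast (sum_Icc_one_fib_add_one m).trans fib_add_two
    linarith
  exact Int.natCast_dvd_natCast.mp (hsum ▸ dvd_add h₀ h₁)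

theorem two_mul_dvd_fib_two_mul {M m : ℕ} (hM : Even M) (h₀ : (M : ℤ) ∣ fib m)
    (h₁ : (M : ℤ) ∣ fib (m + 1) - 1) :
    ((2 * M : ℕ) : ℤ) ∣ fib (2 * m) ∧ ((2 * M : ℕ) : ℤ) ∣ fib (2 * m + 1) - 1 := by
  obtain ⟨c, rfl⟩ := hM
  obtain ⟨a, ha⟩ := h₀
  obtain ⟨b, hb⟩ := h₁
  have hF₂ : (fib (2 * m) : ℤ) = fib m * (2 * fib (m + 1) - fib m) := by
    simpa only [← Int.fib_natCast, Nat.cast_mul, Nat.cast_add, Nat.cast_ofNat, Nat.cast_one]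
      using Int.fib_two_mul m
  have hF₃ : (fib (2 * m + 1) : ℤ) = fib (m + 1) ^ 2 + fib m ^ 2 := by
    simpa only [← Int.fib_natCast, Nat.cast_mul, Nat.cast_add, Nat.cast_ofNat, Nat.cast_one]
      using Int.fib_two_mul_add_one m
  push_cast at ha hb ⊢
  rw [eq_add_of_sub_eq hb] at hF₂ hF₃
  constructor
  · exact ⟨a + c * a * (2 * b - a), by rw [hF₂, ha]; ring⟩
  · exact ⟨b + c * (a ^ 2 + b ^ 2), by rw [hF₃, ha]; ring⟩

theorem dvd_fib_three_mul_two_pow (n : ℕ) :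
    ((3 * 2 ^ (n + 3) : ℕ) : ℤ) ∣ fib (3 * 2 ^ (n + 3)) ∧
      ((3 * 2 ^ (n + 3) : ℕ) : ℤ) ∣ fib (3 * 2 ^ (n + 3) + 1) - 1 := by
  induction n with
  | zero => norm_num
  | succ n ih =>
    rw [show 3 * 2 ^ (n + 1 + 3) = 2 * (3 * 2 ^ (n + 3)) by ring]
    exact two_mul_dvd_fib_two_mul ⟨3 * 2 ^ (n + 2), by ring⟩ ih.1 ih.2

end Nat

theorem stmt_18 (n : ℕ) :
    3 * 2 ^ (n + 3) ∣ ∑ i ∈ Finset.Icc 1 (3 * 2 ^ (n + 3)), Nat.fib i :=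
  Nat.dvd_sum_Icc_one_fib (Nat.dvd_fib_three_mul_two_pow n).1 (Nat.dvd_fib_three_mul_two_pow n).2
end
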